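/- There exist positive constants c, C such that for all N ≥ 4, c·N² log N ≤ Σ_{p=1}^{N-1} Σ_{q=1}^{N-1} (1 - cos(pπ/(2N))·cos(qπ/(2N)))⁻¹ ≤ C·N² log N. -/

import Mathlib

/-!
By the product-to-sum formula, `1 - cos a cos b` is the average of `1 - cos (a - b)` and
`1 - cos (a + b)`, so the bounds `2x²/π² ≤ 1 - cos x ≤ x²/2` (for `|x| ≤ π`) show that it
is comparable to `a² + b²` when `|a| + |b| ≤ π`. Hence the sum is comparable to
`N² ∑ₚ ∑_q 1/(p² + q²)`. For fixed `p`, the `p` terms with `q ≤ p` already give `1/(2p)`,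
while `1/(p² + q²) ≤ 2/((p + q - 1)(p + q))` telescopes to at most `2/p`. Summing over `p`
leaves the harmonic number `H_{N-1}`, which lies between `log N` and `1 + log N`.
-/

open Real Finset

lemma one_sub_cos_mul_cos_eq (a b : ℝ) :
    1 - cos a * cos b = ((1 - cos (a - b)) + (1 - cos (a + b))) / 2 := by
  rw [cos_sub, cos_add]; ring

lemma one_sub_cos_mul_cos_le (a b : ℝ) : 1 - cos a * cos b ≤ (a ^ 2 + b ^ 2) / 2 := by
  have hsub := one_sub_sq_div_two_le_cos (x := a - b)
  have hadd := one_sub_sq_div_two_le_cos (x := a + b)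
  rw [one_sub_cos_mul_cos_eq]
  linear_combination (hsub + hadd) / 2

lemma two_div_pi_sq_mul_le_one_sub_cos_mul_cos {a b : ℝ} (h : |a| + |b| ≤ π) :
    2 / π ^ 2 * (a ^ 2 + b ^ 2) ≤ 1 - cos a * cos b := by
  have hsub := cos_le_one_sub_mul_cos_sq ((abs_sub a b).trans h)
  have hadd := cos_le_one_sub_mul_cos_sq ((abs_add_le a b).trans h)
  have hsq : (a - b) ^ 2 + (a + b) ^ 2 = 2 * (a ^ 2 + b ^ 2) := by ring
  rw [one_sub_cos_mul_cos_eq]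
  linear_combination (hsub + hadd) / 2 + 1 / π ^ 2 * hsq

lemma inv_one_sub_cos_mul_cos_mem_Icc {a b : ℝ} (hab : 0 < a ^ 2 + b ^ 2) (h : |a| + |b| ≤ π) :
    (1 - cos a * cos b)⁻¹ ∈ Set.Icc (2 / (a ^ 2 + b ^ 2)) (π ^ 2 / 2 / (a ^ 2 + b ^ 2)) := by
  have hlow := two_div_pi_sq_mul_le_one_sub_cos_mul_cos h
  have hpos : 0 < 1 - cos a * cos b := lt_of_lt_of_le (by positivity) hlow
  constructor
  · calc 2 / (a ^ 2 + b ^ 2) = ((a ^ 2 + b ^ 2) / 2)⁻¹ := by rw [inv_div]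
      _ ≤ _ := inv_anti₀ hpos (one_sub_cos_mul_cos_le a b)
  · calc (1 - cos a * cos b)⁻¹ ≤ (2 / π ^ 2 * (a ^ 2 + b ^ 2))⁻¹ :=
        inv_anti₀ (by positivity) hlow
      _ = π ^ 2 / 2 / (a ^ 2 + b ^ 2) := by field_simp

lemma inv_one_sub_cos_mul_cos_mul_pi_div_mem_Icc {x y N : ℝ} (hN : 0 < N)
    (hxy : 0 < x ^ 2 + y ^ 2) (h : |x| + |y| ≤ 2 * N) :
    (1 - cos (x * π / (2 * N)) * cos (y * π / (2 * N)))⁻¹ ∈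
      Set.Icc (8 * N ^ 2 / π ^ 2 * (x ^ 2 + y ^ 2)⁻¹) (2 * N ^ 2 * (x ^ 2 + y ^ 2)⁻¹) := by
  have hsq : (x * π / (2 * N)) ^ 2 + (y * π / (2 * N)) ^ 2 =
      π ^ 2 / (4 * N ^ 2) * (x ^ 2 + y ^ 2) := by
    field_simp; ring
  have habs : |x * π / (2 * N)| + |y * π / (2 * N)| = (|x| + |y|) * π / (2 * N) := by
    simp only [abs_div, abs_mul, abs_of_pos pi_pos, abs_of_pos (by positivity : 0 < 2 * N)]; ring
  have hle : |x * π / (2 * N)| + |y * π / (2 * N)| ≤ π := by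
    rw [habs, div_le_iff₀ (by positivity)]; nlinarith [pi_pos]
  have := inv_one_sub_cos_mul_cos_mem_Icc (by rw [hsq]; positivity) hle
  convert this using 2 <;> rw [hsq] <;> field_simp <;> ring

lemma inv_one_sub_cos_mul_cos_mem_Icc_of_mem_Ico {N p q : ℕ} (hp : p ∈ Ico 1 N)
    (hq : q ∈ Ico 1 N) :
    (1 - cos (p * π / (2 * N)) * cos (q * π / (2 * N)))⁻¹ ∈
      Set.Icc (8 * N ^ 2 / π ^ 2 * ((p : ℝ) ^ 2 + q ^ 2)⁻¹)
        (2 * N ^ 2 * ((p : ℝ) ^ 2 + q ^ 2)⁻¹) := by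
  have hp1 : (1 : ℝ) ≤ p := by exact_mod_cast (mem_Ico.mp hp).1
  have hpN : (p : ℝ) < N := by exact_mod_cast (mem_Ico.mp hp).2
  have hqN : (q : ℝ) < N := by exact_mod_cast (mem_Ico.mp hq).2
  refine inv_one_sub_cos_mul_cos_mul_pi_div_mem_Icc (by linarith) (by positivity) ?_
  rw [Nat.abs_cast, Nat.abs_cast]
  linarith

lemma sum_Ico_inv_eq_harmonic (N : ℕ) : ∑ p ∈ Ico 1 N, (p : ℝ)⁻¹ = harmonic (N - 1) := by
  cases N with
  | zero => simp
  | succ n => simp [harmonic_eq_sum_Icc, Ico_add_one_right_eq_Icc]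

lemma log_le_sum_Ico_inv (N : ℕ) : log N ≤ ∑ p ∈ Ico 1 N, (p : ℝ)⁻¹ := by
  cases N with
  | zero => simp
  | succ n => simpa [sum_Ico_inv_eq_harmonic] using log_add_one_le_harmonic n

lemma sum_Ico_inv_le_one_add_log (N : ℕ) : ∑ p ∈ Ico 1 N, (p : ℝ)⁻¹ ≤ 1 + log N := by
  rw [sum_Ico_inv_eq_harmonic]
  refine (harmonic_le_one_add_log _).trans ?_
  match N with
  | 0 | 1 => simp
  | n + 2 => gcongr <;> push_cast <;> linarith

-- `2/(s - 1) - 2/s = 2/((s - 1) s)` and `s² ≤ 2 (x² + y²)` for `s = x + y`.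
lemma inv_sq_add_sq_le_two_div_sub_two_div {x y : ℝ} (hxy : 1 < x + y) :
    (x ^ 2 + y ^ 2)⁻¹ ≤ 2 / (x + y - 1) - 2 / (x + y) := by
  have h1 : 0 < x + y - 1 := by linarith
  have h2 : 0 < x + y := by linarith
  have : 2 / (x + y - 1) - 2 / (x + y) = ((x + y - 1) * (x + y) / 2)⁻¹ := by
    field_simp; ring
  rw [this]
  exact inv_anti₀ (by positivity) (by nlinarith [sq_nonneg (x - y)])

lemma sum_Ico_inv_sq_add_sq_le {p : ℕ} (hp : 1 ≤ p) (N : ℕ) :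
    ∑ q ∈ Ico 1 N, ((p : ℝ) ^ 2 + q ^ 2)⁻¹ ≤ 2 / p := by
  obtain rfl | hN := N.eq_zero_or_pos
  · simp only [Ico_eq_empty_of_le zero_le_one, sum_empty]; positivity
  have hp : (1 : ℝ) ≤ p := by exact_mod_cast hp
  set f : ℕ → ℝ := fun q => -2 / (p + q - 1)
  have hstep : ∀ q ∈ Ico 1 N, ((p : ℝ) ^ 2 + q ^ 2)⁻¹ ≤ f (q + 1) - f q := by
    intro q hq
    have hq : (1 : ℝ) ≤ q := by exact_mod_cast (mem_Ico.mp hq).1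
    have hf : f (q + 1) - f q = 2 / (p + q - 1) - 2 / (p + q) := by simp only [f]; push_cast; ring
    rw [hf]
    exact inv_sq_add_sq_le_two_div_sub_two_div (by linarith)
  have hN' : (1 : ℝ) ≤ N := by exact_mod_cast hN
  have hfN : f N ≤ 0 := div_nonpos_of_nonpos_of_nonneg (by norm_num) (by linarith)
  calc ∑ q ∈ Ico 1 N, ((p : ℝ) ^ 2 + q ^ 2)⁻¹ ≤ ∑ q ∈ Ico 1 N, (f (q + 1) - f q) :=
        sum_le_sum hstep
    _ = f N - f 1 := sum_Ico_sub f hN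
    _ ≤ 2 / p := by
        simp only [f, Nat.cast_one, add_sub_cancel_right, neg_div] at hfN ⊢
        linarith

lemma inv_two_mul_le_sum_Ico_inv_sq_add_sq {p N : ℕ} (hp : 1 ≤ p) (hpN : p < N) :
    (2 * p : ℝ)⁻¹ ≤ ∑ q ∈ Ico 1 N, ((p : ℝ) ^ 2 + q ^ 2)⁻¹ := by
  have hp : (0 : ℝ) < p := by exact_mod_cast hp
  calc (2 * p : ℝ)⁻¹ = ∑ _q ∈ Ico 1 (p + 1), (2 * (p : ℝ) ^ 2)⁻¹ := by
        rw [sum_const, Nat.card_Ico, nsmul_eq_mul, Nat.add_sub_cancel]; field_simp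
    _ ≤ ∑ q ∈ Ico 1 (p + 1), ((p : ℝ) ^ 2 + q ^ 2)⁻¹ := by
        refine sum_le_sum fun q hq => inv_anti₀ (by positivity) ?_
        have hqp : (q : ℝ) ≤ p := by exact_mod_cast Nat.lt_succ_iff.mp (mem_Ico.mp hq).2
        nlinarith [(Nat.cast_nonneg q : (0 : ℝ) ≤ q)]
    _ ≤ ∑ q ∈ Ico 1 N, ((p : ℝ) ^ 2 + q ^ 2)⁻¹ :=
        sum_le_sum_of_subset_of_nonneg (Ico_subset_Ico le_rfl hpN) fun _ _ _ => by positivity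

lemma log_le_two_mul_sum_Ico_sum_Ico_inv_sq_add_sq (N : ℕ) :
    log N ≤ 2 * ∑ p ∈ Ico 1 N, ∑ q ∈ Ico 1 N, ((p : ℝ) ^ 2 + q ^ 2)⁻¹ := by
  calc log N ≤ ∑ p ∈ Ico 1 N, (p : ℝ)⁻¹ := log_le_sum_Ico_inv N
    _ = 2 * ∑ p ∈ Ico 1 N, (2 * p : ℝ)⁻¹ := by rw [mul_sum]; congr! 1; ring
    _ ≤ _ := by
        gcongr with p hp
        exact inv_two_mul_le_sum_Ico_inv_sq_add_sq (mem_Ico.mp hp).1 (mem_Ico.mp hp).2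

lemma sum_Ico_sum_Ico_inv_sq_add_sq_le (N : ℕ) :
    ∑ p ∈ Ico 1 N, ∑ q ∈ Ico 1 N, ((p : ℝ) ^ 2 + q ^ 2)⁻¹ ≤ 2 * (1 + log N) := by
  calc _ ≤ ∑ p ∈ Ico 1 N, 2 * (p : ℝ)⁻¹ := by
        gcongr with p hp
        exact (sum_Ico_inv_sq_add_sq_le (mem_Ico.mp hp).1 N).trans_eq (div_eq_mul_inv _ _)
    _ ≤ 2 * (1 + log N) := by
        rw [← mul_sum]; gcongr; exact sum_Ico_inv_le_one_add_log N

theorem torus_sum_order :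
    ∃ c C : ℝ, 0 < c ∧ 0 < C ∧ ∀ N : ℕ, 4 ≤ N →
      c * (N : ℝ)^2 * Real.log N ≤
        ∑ p ∈ Finset.Ico 1 N, ∑ q ∈ Finset.Ico 1 N,
          (1 - Real.cos (p * π / (2 * N)) * Real.cos (q * π / (2 * N)))⁻¹ ∧
      ∑ p ∈ Finset.Ico 1 N, ∑ q ∈ Finset.Ico 1 N,
          (1 - Real.cos (p * π / (2 * N)) * Real.cos (q * π / (2 * N)))⁻¹
        ≤ C * (N : ℝ)^2 * Real.log N := by
  refine ⟨4 / π ^ 2, 8, by positivity, by norm_num, fun N hN => ?_⟩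
  have hlog : 1 ≤ log N := by
    rw [le_log_iff_exp_le (Nat.cast_pos.mpr (by omega))]
    have : (4 : ℝ) ≤ N := by exact_mod_cast hN
    linarith [exp_one_lt_d9]
  set L := ∑ p ∈ Ico 1 N, ∑ q ∈ Ico 1 N, ((p : ℝ) ^ 2 + q ^ 2)⁻¹ with hL_def
  have hL : log N ≤ 2 * L := log_le_two_mul_sum_Ico_sum_Ico_inv_sq_add_sq N
  have hU : L ≤ 2 * (1 + log N) := sum_Ico_sum_Ico_inv_sq_add_sq_le N
  constructor
  · calc 4 / π ^ 2 * (N : ℝ) ^ 2 * log N ≤ 8 * N ^ 2 / π ^ 2 * L := by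
          linear_combination (4 * N ^ 2 / π ^ 2) * hL
      _ ≤ _ := by
          simp_rw [hL_def, mul_sum]
          gcongr with p hp q hq
          exact (inv_one_sub_cos_mul_cos_mem_Icc_of_mem_Ico hp hq).1
  · calc _ ≤ 2 * N ^ 2 * L := by
          simp_rw [hL_def, mul_sum]
          gcongr with p hp q hq
          exact (inv_one_sub_cos_mul_cos_mem_Icc_of_mem_Ico hp hq).2
      _ ≤ 8 * (N : ℝ) ^ 2 * log N := by
          linear_combination (2 * N ^ 2) * hU + (4 * N ^ 2) * hlog
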